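/- Let H ≠ ℕ be a numerical semigroup with Frobenius number f = f(H), and set Ω(H) = {f − x + h : x ∈ QF(H), h ∈ H} ⊆ ℕ. Then there exists n ≥ 1 such that the n-fold sumset Ω(H) + Ω(H) + ⋯ + Ω(H) (n summands) equals ℕ if and only if f − 1 ∈ QF(H). -/

import Mathlib

set_option synthInstance.maxHeartbeats 400000
set_option maxHeartbeats 1000000

open Pointwise

/-- The Frobenius number of a numerical semigroup `H ⊆ ℕ`: the largest natural number
not in `H` (meaningful when `H ≠ ℕ` and the complement of `H` is finite). -/
noncomputable def frobeniusNumber (H : AddSubmonoid ℕ) : ℕ :=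
  sSup {x : ℕ | x ∉ H}

/-- The set of quasi-Frobenius numbers of a numerical semigroup `H`:
`QF(H) = {x ∈ ℕ \ H : x + h ∈ H for every nonzero h ∈ H}`. -/
def QF (H : AddSubmonoid ℕ) : Set ℕ :=
  {x | x ∉ H ∧ ∀ h ∈ H, h ≠ 0 → x + h ∈ H}

/-- `Ω(H) = {f − x + h : x ∈ QF(H), h ∈ H} ⊆ ℕ`, where `f` is the Frobenius number. -/
noncomputable def OmegaSet (H : AddSubmonoid ℕ) : Set ℕ :=
  {m | ∃ x ∈ QF H, ∃ h ∈ H, m = frobeniusNumber H - x + h}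

/-- The `n`-fold pointwise sumset `S + S + ⋯ + S` (`n` summands) of a set `S ⊆ ℕ`. -/
def iterSumset (S : Set ℕ) : ℕ → Set ℕ
  | 0 => {0}
  | n + 1 => S + iterSumset S n

/-!
Since `f ∈ QF(H)`, the set `Ω(H)` contains `H`, hence `0` and every integer above `f`.
Because `1 ∉ H`, the only way to write `1 = f - x + h` is with `h = 0` and `x = f - 1`, so
`1 ∈ Ω(H)` exactly when `f - 1 ∈ QF(H)`. A sum of naturals equals `1` only if one summand
does, so `1` lies in some `n`-fold sumset of `Ω(H)` iff it lies in `Ω(H)`; conversely, once `0, 1 ∈ Ω(H)`,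
the `(f + 1)`-fold sumset reaches every `m ≤ f` as `1 + ⋯ + 1` and every `m > f` directly.
-/

section iterSumset

variable {S : Set ℕ}

lemma zero_mem_iterSumset (h0 : 0 ∈ S) (n : ℕ) : 0 ∈ iterSumset S n := by
  induction n with
  | zero => rfl
  | succ n ih => exact ⟨0, h0, 0, ih, rfl⟩

lemma mem_iterSumset_of_le (h0 : 0 ∈ S) (h1 : 1 ∈ S) :
    ∀ {n m : ℕ}, m ≤ n → m ∈ iterSumset S n
  | 0, m, hm => by rw [Nat.le_zero.1 hm]; rfl
  | n + 1, 0, _ => zero_mem_iterSumset h0 _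
  | n + 1, m + 1, hm => ⟨1, h1, m, mem_iterSumset_of_le h0 h1 (by omega), by simp [add_comm]⟩

lemma iterSumset_succ_eq_univ {n : ℕ} (h0 : 0 ∈ S) (h1 : 1 ∈ S)
    (hlarge : ∀ m, n < m → m ∈ S) : iterSumset S (n + 1) = Set.univ := by
  refine Set.eq_univ_of_forall fun m => ?_
  rcases le_or_gt m n with hm | hm
  · exact ⟨0, h0, m, mem_iterSumset_of_le h0 h1 hm, zero_add m⟩
  · exact ⟨m, hlarge m hm, 0, zero_mem_iterSumset h0 n, add_zero m⟩

lemma one_mem_of_one_mem_iterSumset : ∀ {n : ℕ}, 1 ∈ iterSumset S n → 1 ∈ S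
  | 0, h => absurd (Set.mem_singleton_iff.1 h) one_ne_zero
  | n + 1, ⟨a, ha, b, hb, hab⟩ => by
    obtain ⟨rfl, rfl⟩ | rfl : a = 0 ∧ b = 1 ∨ a = 1 := by
      change a + b = 1 at hab
      omega
    · exact one_mem_of_one_mem_iterSumset hb
    · exact ha

end iterSumset

section Frobenius

variable {H : AddSubmonoid ℕ}

lemma one_notMem_of_ne_top (hne : H ≠ ⊤) : 1 ∉ H := fun h1 =>
  hne <| (AddSubmonoid.eq_top_iff' H).2 fun n => by simpa using H.nsmul_mem h1 n

lemma le_frobeniusNumber (hfin : ((H : Set ℕ)ᶜ).Finite) {x : ℕ} (hx : x ∉ H) :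
    x ≤ frobeniusNumber H :=
  le_csSup hfin.bddAbove hx

lemma mem_of_frobeniusNumber_lt (hfin : ((H : Set ℕ)ᶜ).Finite) {m : ℕ}
    (hm : frobeniusNumber H < m) : m ∈ H :=
  not_not.1 fun h => (le_frobeniusNumber hfin h).not_gt hm

lemma frobeniusNumber_notMem (hfin : ((H : Set ℕ)ᶜ).Finite) (hne : H ≠ ⊤) :
    frobeniusNumber H ∉ H := by
  obtain ⟨x, hx⟩ : ∃ x, x ∉ H := by
    simpa [AddSubmonoid.eq_top_iff'] using hne
  exact Nat.sSup_mem ⟨x, hx⟩ hfin.bddAbove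

lemma frobeniusNumber_mem_QF (hfin : ((H : Set ℕ)ᶜ).Finite) (hne : H ≠ ⊤) :
    frobeniusNumber H ∈ QF H :=
  ⟨frobeniusNumber_notMem hfin hne, fun _ _ hh0 =>
    mem_of_frobeniusNumber_lt hfin (by omega)⟩

lemma mem_OmegaSet_of_mem (hfin : ((H : Set ℕ)ᶜ).Finite) (hne : H ≠ ⊤) {h : ℕ}
    (hh : h ∈ H) : h ∈ OmegaSet H :=
  ⟨frobeniusNumber H, frobeniusNumber_mem_QF hfin hne, h, hh, by simp⟩

lemma one_mem_OmegaSet_iff (hfin : ((H : Set ℕ)ᶜ).Finite) (hne : H ≠ ⊤) :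
    1 ∈ OmegaSet H ↔ frobeniusNumber H - 1 ∈ QF H := by
  constructor
  · rintro ⟨x, hx, h, hh, heq⟩
    have hxf := le_frobeniusNumber hfin hx.1
    obtain rfl | hpos := Nat.eq_zero_or_pos h
    · obtain rfl : x = frobeniusNumber H - 1 := by omega
      exact hx
    · have h1 : h ≠ 1 := fun h1 => one_notMem_of_ne_top hne (h1 ▸ hh)
      omega
  · intro hQF
    have hpos : frobeniusNumber H - 1 ≠ 0 := fun h0 => hQF.1 (h0 ▸ H.zero_mem)
    exact ⟨frobeniusNumber H - 1, hQF, 0, H.zero_mem, by omega⟩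

end Frobenius

/-- Let `H ≠ ℕ` be a numerical semigroup with Frobenius number `f`,
and `Ω(H) = {f − x + h : x ∈ QF(H), h ∈ H}`. Then some `n`-fold sumset
`Ω(H) + ⋯ + Ω(H)` (`n ≥ 1` summands) equals `ℕ` if and only if `f − 1 ∈ QF(H)`. -/
theorem stmt9 (H : AddSubmonoid ℕ)
    (hfin : ((H : Set ℕ)ᶜ).Finite) (hne : H ≠ ⊤) :
    (∃ n : ℕ, 1 ≤ n ∧ iterSumset (OmegaSet H) n = Set.univ) ↔
      frobeniusNumber H - 1 ∈ QF H := by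
  rw [← one_mem_OmegaSet_iff hfin hne]
  constructor
  · rintro ⟨n, -, hn⟩
    exact one_mem_of_one_mem_iterSumset (hn ▸ Set.mem_univ 1)
  · intro h1
    exact ⟨frobeniusNumber H + 1, Nat.le_add_left 1 _,
      iterSumset_succ_eq_univ (mem_OmegaSet_of_mem hfin hne H.zero_mem) h1
        fun m hm => mem_OmegaSet_of_mem hfin hne (mem_of_frobeniusNumber_lt hfin hm)⟩
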